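/- Let n, p be positive integers, let U ∈ ℝ^{n×p} have unit-norm rows (diag(U Uᵀ) = 𝟏), and let z ∈ ℝⁿ. For v ∈ ℝ^p define Ů_v := z vᵀ − ddiag(z vᵀ Uᵀ)·U (the orthogonal projection of z vᵀ onto the tangent space {W : diag(U Wᵀ + W Uᵀ) = 0}). Then for every orthonormal basis {v_1, …, v_p} of ℝ^p: ∑_{k=1}^p Ů_{v_k} Ů_{v_k}ᵀ = (p − 2)·z zᵀ + D_z (U Uᵀ)^{∘2} D_z, where D_z := diag(z) and (U Uᵀ)^{∘2} is the entrywise square of U Uᵀ. -/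

import Mathlib

/-!
Row `i` of `Ů_v` is `z i • (1 - uᵢuᵢᵀ) v` with `uᵢ = U i`, so the `(i, j)` entry of `Ů_v Ů_vᵀ` is
`z i * z j` times `|v|² - (uᵢ⬝v)² - (uⱼ⬝v)² + (uᵢ⬝v)(uⱼ⬝v)(uᵢ⬝uⱼ)`. Summed over an orthonormal basis,
Parseval's identity `∑ₖ (a⬝vₖ)(b⬝vₖ) = a⬝b` turns this into `p - |uᵢ|² - |uⱼ|² + (uᵢ⬝uⱼ)²`,
which is `p - 2 + (UUᵀ)ᵢⱼ²` for unit rows.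
-/

open Matrix Filter Finset
open scoped Classical

noncomputable section

/-- Frobenius inner product `⟨A, B⟩ = tr(Bᵀ A)` of real square matrices. -/
def mip {d : ℕ} (A B : Matrix (Fin d) (Fin d) ℝ) : ℝ := (Bᵀ * A).trace

/-- Squared Frobenius norm of a real matrix. -/
def frobSq {m p : ℕ} (X : Matrix (Fin m) (Fin p) ℝ) : ℝ := ∑ i, ∑ j, (X i j) ^ 2

/-- Squared Euclidean norm of a real vector. -/
def vnormSq {n : ℕ} (v : Fin n → ℝ) : ℝ := ∑ i, (v i) ^ 2

/-- Euclidean norm of a real vector. -/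
def vnorm {n : ℕ} (v : Fin n → ℝ) : ℝ := Real.sqrt (vnormSq v)

/-- Euclidean inner product of real vectors. -/
def vip {n : ℕ} (u v : Fin n → ℝ) : ℝ := ∑ i, u i * v i

/-- `ddiag A` keeps the diagonal of `A`, setting off-diagonal entries to zero. -/
def ddiag {n : ℕ} (A : Matrix (Fin n) (Fin n) ℝ) : Matrix (Fin n) (Fin n) ℝ :=
  Matrix.diagonal fun i => A i i

/-- `rowNorms M` is the vector of Euclidean norms of the rows of `M` (`|M|`). -/
def rowNorms {n k : ℕ} (M : Matrix (Fin n) (Fin k) ℝ) : Fin n → ℝ :=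
  fun i => Real.sqrt (∑ j, (M i j) ^ 2)

namespace Matrix

variable {ι R : Type*} [Fintype ι] [CommRing R]

/-- For a unit vector `a`, this is `(1 - a aᵀ) v`, the orthogonal projection of `v` onto `a⊥`. -/
def vecReject (a v : ι → R) : ι → R := v - (a ⬝ᵥ v) • a

theorem vecReject_dotProduct_vecReject (a b v : ι → R) :
    vecReject a v ⬝ᵥ vecReject b v
      = v ⬝ᵥ v - (a ⬝ᵥ v) ^ 2 - (b ⬝ᵥ v) ^ 2 + (a ⬝ᵥ v) * (b ⬝ᵥ v) * (a ⬝ᵥ b) := by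
  simp only [vecReject, sub_dotProduct, dotProduct_sub, smul_dotProduct, dotProduct_smul,
    smul_eq_mul, dotProduct_comm v b]
  ring

theorem mul_transpose_self_apply {m : Type*} (A : Matrix m ι R) (i j : m) :
    (A * Aᵀ) i j = A i ⬝ᵥ A j :=
  rfl

variable [DecidableEq ι]

theorem mulVec_dotProduct_mulVec_of_transpose_mul_self_eq_one {V : Matrix ι ι R}
    (hV : Vᵀ * V = 1) (a b : ι → R) : (V *ᵥ a) ⬝ᵥ (V *ᵥ b) = a ⬝ᵥ b := by
  rw [dotProduct_mulVec, ← vecMul_transpose, vecMul_vecMul, hV, vecMul_one]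

theorem sum_vecReject_dotProduct_vecReject {V : ι → ι → R}
    (hV : ∀ k l, V k ⬝ᵥ V l = if k = l then 1 else 0) (a b : ι → R) :
    ∑ k, vecReject a (V k) ⬝ᵥ vecReject b (V k)
      = Fintype.card ι - a ⬝ᵥ a - b ⬝ᵥ b + (a ⬝ᵥ b) ^ 2 := by
  have hVVt : of V * (of V)ᵀ = 1 := by
    ext k l
    exact hV k l
  have parseval (c d : ι → R) : ∑ k, (c ⬝ᵥ V k) * (d ⬝ᵥ V k) = c ⬝ᵥ d := by
    rw [← mulVec_dotProduct_mulVec_of_transpose_mul_self_eq_one (mul_eq_one_comm.mp hVVt) c d]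
    simp only [dotProduct, mulVec, of_apply, mul_comm]
  simp only [vecReject_dotProduct_vecReject, sq, Finset.sum_add_distrib, Finset.sum_sub_distrib,
    ← Finset.sum_mul, parseval, hV, if_true, Finset.sum_const, Finset.card_univ, nsmul_one]

end Matrix

theorem vecMulVec_sub_ddiag_mul_apply {n p : ℕ} (U : Matrix (Fin n) (Fin p) ℝ) (z : Fin n → ℝ)
    (v : Fin p → ℝ) (i : Fin n) :
    (vecMulVec z v - ddiag (vecMulVec z v * Uᵀ) * U) i = z i • vecReject (U i) v := by
  ext m
  rw [Matrix.sub_apply, ddiag, diagonal_mul]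
  simp only [vecMulVec_apply, mul_apply, transpose_apply, vecReject, Pi.sub_apply, Pi.smul_apply,
    smul_eq_mul, dotProduct, Finset.sum_mul]
  rw [mul_sub, Finset.mul_sum]
  congr 1
  exact Finset.sum_congr rfl fun _ _ => by ring

theorem stmt19_general {n p : ℕ}
    (U : Matrix (Fin n) (Fin p) ℝ) (hU : ∀ i, (U * Uᵀ) i i = 1)
    (z : Fin n → ℝ)
    (Udot : (Fin p → ℝ) → Matrix (Fin n) (Fin p) ℝ)
    (hUdot : ∀ v, Udot v = Matrix.vecMulVec z v
        - ddiag (Matrix.vecMulVec z v * Uᵀ) * U) :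
    ∀ v : Fin p → (Fin p → ℝ),
      (∀ k l, vip (v k) (v l) = if k = l then (1:ℝ) else 0) →
      ∑ k, Udot (v k) * (Udot (v k))ᵀ =
        ((p:ℝ) - 2) • Matrix.vecMulVec z z
          + Matrix.diagonal z * Matrix.hadamard (U * Uᵀ) (U * Uᵀ)
            * Matrix.diagonal z := by
  intro v hv
  have hU' (i : Fin n) : U i ⬝ᵥ U i = 1 := hU i
  ext i j
  simp only [Matrix.sum_apply, mul_transpose_self_apply, hUdot, vecMulVec_sub_ddiag_mul_apply,
    smul_dotProduct, dotProduct_smul, smul_eq_mul, ← mul_assoc, ← Finset.mul_sum]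
  rw [sum_vecReject_dotProduct_vecReject hv, hU' i, hU' j]
  simp only [Matrix.add_apply, Matrix.smul_apply, diagonal_mul, mul_diagonal, hadamard_apply,
    mul_transpose_self_apply, vecMulVec_apply, smul_eq_mul, Fintype.card_fin]
  ring

/-- Tangent-space identity: summing the projected rank-one directions
`Ů_v = zvᵀ − ddiag(zvᵀUᵀ)U` over an orthonormal basis `{v₁, …, v_p}` of `ℝ^p`
gives `(p − 2)·zzᵀ + D_z (UUᵀ)^{∘2} D_z`. -/
theorem stmt19 {n p : ℕ} (hn : 0 < n) (hp : 0 < p)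
    (U : Matrix (Fin n) (Fin p) ℝ) (hU : ∀ i, (U * Uᵀ) i i = 1)
    (z : Fin n → ℝ)
    (Udot : (Fin p → ℝ) → Matrix (Fin n) (Fin p) ℝ)
    (hUdot : ∀ v, Udot v = Matrix.vecMulVec z v
        - ddiag (Matrix.vecMulVec z v * Uᵀ) * U) :
    ∀ v : Fin p → (Fin p → ℝ),
      (∀ k l, vip (v k) (v l) = if k = l then (1:ℝ) else 0) →
      ∑ k, Udot (v k) * (Udot (v k))ᵀ =
        ((p:ℝ) - 2) • Matrix.vecMulVec z z
          + Matrix.diagonal z * Matrix.hadamard (U * Uᵀ) (U * Uᵀ)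
            * Matrix.diagonal z :=
  stmt19_general U hU z Udot hUdot
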